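/- (Finite sample guarantees for SVP.) Let K := 2·sup_{x∈𝒳} max_{i∈Σ} |ℓ(x,i)|. For every x ∈ 𝒳, P ∈ 𝒫°, and T ∈ ℕ: ℙ^∞( c(x,P) ≤ ĉ_V(x,P̂_T,T) + (7K/3)·(a_T/T) ) ≥ 1 − 2e^{−a_T}, and ℙ^∞( c(x,P) ≥ ĉ_V(x,P̂_T,T) − √( (8a_T/T)·Var_P(ℓ(x,ξ)) ) − (7K/3)·(a_T/T) ) ≥ 1 − 2e^{−a_T}. -/

import Mathlib

open Filter Asymptotics

namespace DDO

/-- The probability simplex `𝒫` over the scenario set `Σ = Fin d`. -/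
def simplex (d : ℕ) : Set (Fin d → ℝ) :=
  {P | (∀ i, 0 ≤ P i) ∧ ∑ i, P i = 1}

/-- The relative interior `𝒫°` of the probability simplex. -/
def simplexInt (d : ℕ) : Set (Fin d → ℝ) :=
  {P | (∀ i, 0 < P i) ∧ ∑ i, P i = 1}

/-- Expected cost `c(x, P) = ∑ i, ℓ(x, i) · P(i)` (extended linearly to `ℝ^d`). -/
noncomputable def cost {X : Type*} {d : ℕ} (ℓ : X → Fin d → ℝ) (x : X)
    (P : Fin d → ℝ) : ℝ :=
  ∑ i, ℓ x i * P i

/-- Variance `Var_P(ℓ(x, ξ))` of the loss under `P`. -/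
noncomputable def varLoss {X : Type*} {d : ℕ} (ℓ : X → Fin d → ℝ) (x : X)
    (P : Fin d → ℝ) : ℝ :=
  (∑ i, ℓ x i ^ 2 * P i) - cost ℓ x P ^ 2

/-- Empirical distribution `P̂_T` of the `T` samples `ω`. -/
noncomputable def empDist {d T : ℕ} (ω : Fin T → Fin d) : Fin d → ℝ :=
  fun i => ((Finset.univ.filter (fun t => ω t = i)).card : ℝ) / (T : ℝ)

open Classical in
/-- `ℙ^∞(A)`: the probability, under i.i.d. sampling from `P`, of an event `A`
depending on the first `T` samples. -/
noncomputable def probT {d : ℕ} (P : Fin d → ℝ) (T : ℕ)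
    (A : (Fin T → Fin d) → Prop) : ℝ :=
  ∑ ω : Fin T → Fin d, if A ω then ∏ t, P (ω t) else 0

/-- Regular predictors (the class `𝒞`): uniformly bounded, equicontinuous,
differentiable in the distribution argument (in the Fréchet sense along the simplex),
with uniformly bounded and equicontinuous derivatives. -/
structure IsRegularPredictor {X : Type*} [MetricSpace X] (d : ℕ)
    (chat : X → (Fin d → ℝ) → ℕ → ℝ) : Prop where
  unifBounded : ∃ K : ℝ, ∀ (T : ℕ) (x : X), ∀ P ∈ simplex d, |chat x P T| ≤ K
  equicontinuous : ∀ (x : X), ∀ P ∈ simplex d, ∀ ε > (0 : ℝ), ∃ δ > (0 : ℝ),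
    ∀ (T : ℕ) (x' : X), ∀ P' ∈ simplex d,
      dist x x' < δ → dist P P' < δ → |chat x P T - chat x' P' T| < ε
  differentiableDeriv : ∃ D : X → (Fin d → ℝ) → ℕ → ((Fin d → ℝ) →L[ℝ] ℝ),
    (∀ (T : ℕ) (x : X), ∀ P ∈ simplex d,
      HasFDerivWithinAt (fun Q => chat x Q T) (D x P T) (simplex d) P) ∧
    (∃ K : ℝ, ∀ (T : ℕ) (x : X), ∀ P ∈ simplex d, ‖D x P T‖ ≤ K) ∧
    (∀ (x : X), ∀ P ∈ simplex d, ∀ ε > (0 : ℝ), ∃ δ > (0 : ℝ),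
      ∀ (T : ℕ) (x' : X), ∀ P' ∈ simplex d,
        dist x x' < δ → dist P P' < δ → ‖D x P T - D x' P' T‖ < ε)

/-- The out-of-sample guarantee at speed `(a_T)`:
`limsup_{T→∞} (1/a_T) · log ℙ^∞( c(x,P) > ĉ(x, P̂_T, T) ) ≤ -1`
for every `x ∈ 𝒳` and `P ∈ 𝒫°`, stated in the equivalent ε-eventual form
`ℙ^∞(disappointment) ≤ exp((-1+ε) a_T)` eventually (which in particular permits a
disappointment probability equal to zero). -/
def OOSGuarantee {X : Type*} {d : ℕ} (ℓ : X → Fin d → ℝ) (a : ℕ → ℝ)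
    (chat : X → (Fin d → ℝ) → ℕ → ℝ) : Prop :=
  ∀ (x : X), ∀ P ∈ simplexInt d, ∀ ε > (0 : ℝ), ∀ᶠ T : ℕ in atTop,
    probT P T (fun ω => cost ℓ x P > chat x (empDist ω) T) ≤
      Real.exp ((-1 + ε) * a T)

/-- The prediction error `|ĉ(x,P,T) - c(x,P)|`. -/
noncomputable def predErr {X : Type*} {d : ℕ} (ℓ : X → Fin d → ℝ)
    (chat : X → (Fin d → ℝ) → ℕ → ℝ) (x : X) (P : Fin d → ℝ) (T : ℕ) : ℝ :=
  |chat x P T - cost ℓ x P|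

open Classical in
/-- Ratio with the convention `0 / 0 = 1`. -/
noncomputable def ratio (u v : ℝ) : ℝ := if u = 0 ∧ v = 0 then 1 else u / v

/-- The partial order `⪯_𝒞` on predictors:
`limsup_{T→∞} |ĉ₁(x,P,T) - c(x,P)| / |ĉ₂(x,P,T) - c(x,P)| ≤ 1`
(convention `0/0 = 1`) for every `x ∈ 𝒳`, `P ∈ 𝒫°`, stated in the equivalent
ε-eventual form (the ratio is a nonnegative sequence). -/
def PredOrder {X : Type*} {d : ℕ} (ℓ : X → Fin d → ℝ)
    (chat1 chat2 : X → (Fin d → ℝ) → ℕ → ℝ) : Prop :=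
  ∀ (x : X), ∀ P ∈ simplexInt d, ∀ ε > (0 : ℝ), ∀ᶠ T : ℕ in atTop,
    ratio (predErr ℓ chat1 x P T) (predErr ℓ chat2 x P T) ≤ 1 + ε

/-- The equivalence `≡` on predictors: `|ĉ₁ - c|` and `|ĉ₂ - c|` are asymptotically
equivalent as `T → ∞` for every `x ∈ 𝒳` and `P ∈ 𝒫°`. -/
def PredEquiv {X : Type*} {d : ℕ} (ℓ : X → Fin d → ℝ)
    (chat1 chat2 : X → (Fin d → ℝ) → ℕ → ℝ) : Prop :=
  ∀ (x : X), ∀ P ∈ simplexInt d,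
    (fun T : ℕ => predErr ℓ chat1 x P T) ~[atTop]
      (fun T : ℕ => predErr ℓ chat2 x P T)

/-- A single term `q · log(q/p)` of the relative entropy, with the conventions
`0 · log(0/p) = 0` and `q · log(q/0) = ∞` for `q > 0`. -/
noncomputable def klTerm (q p : ℝ) : EReal :=
  if q = 0 then 0 else if p = 0 then ⊤ else ((q * Real.log (q / p) : ℝ) : EReal)

/-- The relative entropy (KL divergence) `I(Q, P')`. -/
noncomputable def relEnt {d : ℕ} (Q P' : Fin d → ℝ) : EReal :=
  ∑ i, klTerm (Q i) (P' i)

/-- The KL-DRO predictor with radius `r`: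
`ĉ_KL(x,P) = sup { c(x,P') : P' ∈ 𝒫, I(P,P') ≤ r }`. -/
noncomputable def cKL {X : Type*} {d : ℕ} (ℓ : X → Fin d → ℝ) (r : ℝ)
    (x : X) (P : Fin d → ℝ) : ℝ :=
  sSup {y | ∃ P' ∈ simplex d, relEnt P P' ≤ (r : EReal) ∧ y = cost ℓ x P'}

/-- The robust predictor `ĉ_R(x) = max_{i ∈ Σ} ℓ(x,i)`. -/
noncomputable def cR {X : Type*} {d : ℕ} (ℓ : X → Fin d → ℝ) (x : X) : ℝ :=
  ⨆ i : Fin d, ℓ x i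

/-- The sample variance penalization (SVP) predictor
`ĉ_V(x,P,T) = c(x,P) + √((2 a_T / T) · Var_P(ℓ(x,ξ)))`. -/
noncomputable def cV {X : Type*} {d : ℕ} (a : ℕ → ℝ) (ℓ : X → Fin d → ℝ)
    (x : X) (P : Fin d → ℝ) (T : ℕ) : ℝ :=
  cost ℓ x P + Real.sqrt ((2 * a T / (T : ℝ)) * varLoss ℓ x P)

/-- The squared local ellipsoid norm `‖Δ‖_P² = (1/2) ∑ i, Δ_i² / P(i)`. -/
noncomputable def ellNormSq {d : ℕ} (P Δ : Fin d → ℝ) : ℝ :=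
  (1 / 2) * ∑ i, Δ i ^ 2 / P i

/-- The optimal cost `c*(P) = min_{x ∈ 𝒳} c(x,P)`. -/
noncomputable def cstar {X : Type*} {d : ℕ} (ℓ : X → Fin d → ℝ)
    (P : Fin d → ℝ) : ℝ :=
  sInf (Set.range fun x : X => cost ℓ x P)

/-- The optimal predicted cost `ĉ*(P,T) = min_{x ∈ 𝒳} ĉ(x,P,T)`. -/
noncomputable def chatStar {X : Type*} {d : ℕ} (chat : X → (Fin d → ℝ) → ℕ → ℝ)
    (P : Fin d → ℝ) (T : ℕ) : ℝ :=
  sInf (Set.range fun x : X => chat x P T)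

/-- `x̂` is a prescriptor associated with the predictor `ĉ`:
`x̂_T(P) ∈ argmin_{x ∈ 𝒳} ĉ(x,P,T)` for all `P ∈ 𝒫` and `T`. -/
def IsPrescriptor {X : Type*} {d : ℕ} (chat : X → (Fin d → ℝ) → ℕ → ℝ)
    (xhat : ℕ → (Fin d → ℝ) → X) : Prop :=
  ∀ (T : ℕ), ∀ P ∈ simplex d, ∀ x : X, chat (xhat T P) P T ≤ chat x P T

/-- The prescription out-of-sample guarantee at speed `(a_T)`:
`limsup_{T→∞} (1/a_T) · log ℙ^∞( c(x̂_T(P̂_T), P) > ĉ*(P̂_T, T) ) ≤ -1`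
for every `P ∈ 𝒫°`, stated in the equivalent ε-eventual form. -/
def PrescOOSGuarantee {X : Type*} {d : ℕ} (ℓ : X → Fin d → ℝ) (a : ℕ → ℝ)
    (chat : X → (Fin d → ℝ) → ℕ → ℝ) (xhat : ℕ → (Fin d → ℝ) → X) : Prop :=
  ∀ P ∈ simplexInt d, ∀ ε > (0 : ℝ), ∀ᶠ T : ℕ in atTop,
    probT P T (fun ω =>
        cost ℓ (xhat T (empDist ω)) P > chatStar chat (empDist ω) T) ≤
      Real.exp ((-1 + ε) * a T)

/-- The partial order `⪯_X̂` on prescriptors: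
`limsup_{T→∞} |ĉ₁*(P,T) - c*(P)| / |ĉ₂*(P,T) - c*(P)| ≤ 1` (convention `0/0 = 1`)
for every `P ∈ 𝒫°`, stated in the equivalent ε-eventual form. -/
def PrescOrder {X : Type*} {d : ℕ} (ℓ : X → Fin d → ℝ)
    (chat1 chat2 : X → (Fin d → ℝ) → ℕ → ℝ) : Prop :=
  ∀ P ∈ simplexInt d, ∀ ε > (0 : ℝ), ∀ᶠ T : ℕ in atTop,
    ratio |chatStar chat1 P T - cstar ℓ P| |chatStar chat2 P T - cstar ℓ P| ≤ 1 + ε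

/-- The equivalence `≡_X̂` on prescriptors: `|ĉ₁* - c*|` and `|ĉ₂* - c*|` are
asymptotically equivalent as `T → ∞` for every `P ∈ 𝒫°`. -/
def PrescEquiv {X : Type*} {d : ℕ} (ℓ : X → Fin d → ℝ)
    (chat1 chat2 : X → (Fin d → ℝ) → ℕ → ℝ) : Prop :=
  ∀ P ∈ simplexInt d,
    (fun T : ℕ => |chatStar chat1 P T - cstar ℓ P|) ~[atTop]
      (fun T : ℕ => |chatStar chat2 P T - cstar ℓ P|)


/-!
Write `μ`, `s²` for the mean and variance of `ℓ(x, ξ)` under `P`, `μ̂`, `ŝ²` for the empirical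
ones, and `ε = √(2 a_T / T)`, so that `7K/3 · a_T/T = 7/6 · K ε²`, `√(8 a_T/T · s²) = 2 ε s` and
`e^{-a_T} = e^{-T ε² / 2}`. Each bound is a union bound over two tail events of probability at most
`e^{-a_T}`; note `|ℓ - μ| ≤ K` and `s ≤ K / 2`.

For `μ ≤ μ̂ + ε ŝ + 7/6 K ε²`, Bernstein's inequality gives `μ - μ̂ < s ε + K ε² / 6`, which
suffices when `s ≤ K ε`. Otherwise it remains to see `ŝ ≥ s - K ε` whenever `μ - μ̂` lies in the
range `(7/6 K ε², s ε + K ε² / 6)`: since `ŝ²` is the empirical second moment about any centre `ν`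
minus `(μ̂ - ν)²`, a Chernoff lower-tail bound for the second moment about the midpoint of that
range does it.

For `μ̂ + ε ŝ - 2 ε s - 7/6 K ε² ≤ μ`, Bernstein's inequality for `ℓ - μ` and for
`(ℓ - μ)² - s²` gives `μ̂ - μ < s ε + K ε² / 6` and `ŝ² + (μ̂ - μ)² < (s + K ε)²`.

If `s = 0`, the loss is constant since `P` has full support, and both events are sure.
-/

open Real

section Sampling

variable {d T : ℕ} {P : Fin d → ℝ}

lemma probT_le_add_of_imp_or (hP0 : ∀ i, 0 ≤ P i) {A B C : (Fin T → Fin d) → Prop}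
    (h : ∀ ω, A ω → B ω ∨ C ω) : probT P T A ≤ probT P T B + probT P T C := by
  classical
  unfold probT
  rw [← Finset.sum_add_distrib]
  refine Finset.sum_le_sum fun ω _ => ?_
  have hw : 0 ≤ ∏ t, P (ω t) := Finset.prod_nonneg fun t _ => hP0 (ω t)
  by_cases hA : A ω
  · rcases h ω hA with hB | hC
    · by_cases hC : C ω <;> simp [hA, hB, hC, hw]
    · by_cases hB : B ω <;> simp [hA, hB, hC, hw]
  · by_cases hB : B ω <;> by_cases hC : C ω <;> simp [hA, hB, hC, hw]

lemma probT_not (hP1 : ∑ i, P i = 1) (A : (Fin T → Fin d) → Prop) :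
    probT P T (fun ω => ¬ A ω) = 1 - probT P T A := by
  classical
  have htotal : ∑ ω : Fin T → Fin d, ∏ t, P (ω t) = 1 := by
    rw [← Fintype.sum_pow, hP1, one_pow]
  rw [← htotal, probT, probT, ← Finset.sum_sub_distrib]
  refine Finset.sum_congr rfl fun ω _ => ?_
  by_cases hA : A ω <;> simp [hA]

lemma one_sub_two_mul_le_probT (hP0 : ∀ i, 0 ≤ P i) (hP1 : ∑ i, P i = 1)
    {A B C : (Fin T → Fin d) → Prop} {e : ℝ} (hB : probT P T B ≤ e) (hC : probT P T C ≤ e)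
    (h : ∀ ω, ¬ A ω → B ω ∨ C ω) : 1 - 2 * e ≤ probT P T A := by
  have := probT_le_add_of_imp_or hP0 h
  rw [probT_not hP1] at this
  linarith

lemma probT_of_forall (hP1 : ∑ i, P i = 1) {A : (Fin T → Fin d) → Prop} (h : ∀ ω, A ω) :
    probT P T A = 1 := by
  simp [probT, h, ← Fintype.sum_pow, hP1]

lemma sum_apply_eq_mul_sum_empDist (hT : 0 < T) (ω : Fin T → Fin d) (f : Fin d → ℝ) :
    ∑ t, f (ω t) = T * ∑ i, f i * empDist ω i := by
  have hT' : (T : ℝ) ≠ 0 := by positivity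
  rw [← Finset.sum_fiberwise_of_maps_to (g := ω) (fun t _ => Finset.mem_univ (ω t)),
    Finset.mul_sum]
  refine Finset.sum_congr rfl fun i _ => ?_
  rw [Finset.sum_congr rfl fun t ht => by rw [(Finset.mem_filter.1 ht).2], Finset.sum_const,
    nsmul_eq_mul, empDist]
  field_simp

lemma empDist_mem_simplex (hT : 0 < T) (ω : Fin T → Fin d) : empDist ω ∈ simplex d := by
  refine ⟨fun i => by unfold empDist; positivity, ?_⟩
  have := sum_apply_eq_mul_sum_empDist hT ω fun _ => 1
  simp only [Finset.sum_const, Finset.card_univ, Fintype.card_fin, nsmul_eq_mul, mul_one,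
    one_mul] at this
  have hT' : (T : ℝ) ≠ 0 := by positivity
  exact (mul_eq_left₀ hT').1 this.symm

lemma probT_le_exp_mul_mgf_pow (hP0 : ∀ i, 0 ≤ P i) (hT : 0 < T) (f : Fin d → ℝ)
    {c l : ℝ} (hl : 0 ≤ l) :
    probT P T (fun ω => c ≤ ∑ i, f i * empDist ω i) ≤
      exp (-(l * T * c)) * (∑ i, exp (l * f i) * P i) ^ T := by
  classical
  rw [Fintype.sum_pow, Finset.mul_sum]
  refine Finset.sum_le_sum fun ω _ => ?_
  have hw : 0 ≤ ∏ t, P (ω t) := Finset.prod_nonneg fun t _ => hP0 (ω t)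
  have hprod : exp (-(l * T * c)) * ∏ t, exp (l * f (ω t)) * P (ω t) =
      exp (l * (T * ∑ i, f i * empDist ω i - T * c)) * ∏ t, P (ω t) := by
    rw [Finset.prod_mul_distrib, ← exp_sum, ← Finset.mul_sum,
      sum_apply_eq_mul_sum_empDist hT, ← mul_assoc, ← exp_add]
    ring_nf
  rw [hprod]
  split_ifs with hc
  · refine le_mul_of_one_le_left hw (one_le_exp ?_)
    have : (T : ℝ) * c ≤ T * ∑ i, f i * empDist ω i := by gcongr
    nlinarith
  · positivity

end Sampling

lemma nonneg_of_hasDerivAt_nonneg {f f' : ℝ → ℝ} (hf : ∀ t, HasDerivAt f (f' t) t)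
    (h0 : f 0 = 0) (hf' : ∀ t, 0 ≤ t → 0 ≤ f' t) {x : ℝ} (hx : 0 ≤ x) : 0 ≤ f x := by
  have hmono : MonotoneOn f (Set.Ici 0) :=
    monotoneOn_of_hasDerivWithinAt_nonneg (convex_Ici 0)
      (fun t _ => (hf t).continuousAt.continuousWithinAt)
      (fun t _ => (hf t).hasDerivWithinAt)
      (fun t ht => hf' t (interior_subset ht))
  simpa [h0] using hmono Set.self_mem_Ici hx hx

lemma exp_neg_le_one_sub_add_sq_div_two {y : ℝ} (hy : 0 ≤ y) :
    exp (-y) ≤ 1 - y + y ^ 2 / 2 := by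
  have hderiv : ∀ t, HasDerivAt (fun t => 1 - t + t ^ 2 / 2 - exp (-t))
      (-1 + t + exp (-t)) t := fun t => by
    refine ((((hasDerivAt_id t).const_sub 1).add ((hasDerivAt_pow 2 t).div_const 2)).sub
      (hasDerivAt_neg t).exp).congr_deriv ?_
    simp
  have := nonneg_of_hasDerivAt_nonneg hderiv (by simp)
    (fun t _ => by linarith [add_one_le_exp (-t)]) hy
  linarith

lemma three_sub_mul_exp_le {x : ℝ} (hx : 0 ≤ x) :
    (3 - x) * exp x ≤ 3 + 2 * x + x ^ 2 / 2 := by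
  have hderiv : ∀ t, HasDerivAt (fun t => (3 + 2 * t + t ^ 2 / 2) * exp (-t) + t - 3)
      (1 - (1 + t + t ^ 2 / 2) * exp (-t)) t := fun t => by
    have hq : HasDerivAt (fun t => 3 + 2 * t + t ^ 2 / 2) (2 + t) t := by
      refine ((((hasDerivAt_id t).const_mul 2).const_add 3).add
        ((hasDerivAt_pow 2 t).div_const 2)).congr_deriv ?_
      simp
    refine (((hq.mul (hasDerivAt_neg t).exp).add (hasDerivAt_id t)).sub_const 3).congr_deriv ?_
    simp; ring
  have key := nonneg_of_hasDerivAt_nonneg hderiv (by simp) (fun t ht => by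
    have := mul_le_mul_of_nonneg_right (quadratic_le_exp_of_nonneg ht) (exp_pos (-t)).le
    rw [← exp_add, add_neg_cancel, exp_zero] at this
    linarith) hx
  have hexp : exp (-x) * exp x = 1 := by rw [← exp_add, neg_add_cancel, exp_zero]
  nlinarith [exp_pos x]

lemma exp_le_one_add_add_sq_div {x c : ℝ} (hxc : x ≤ c) (hc : 0 ≤ c) (hc3 : c < 3) :
    exp x ≤ 1 + x + x ^ 2 / (2 * (1 - c / 3)) := by
  have hsq : x ^ 2 / 2 ≤ x ^ 2 / (2 * (1 - c / 3)) :=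
    div_le_div_of_nonneg_left (sq_nonneg x) (by linarith) (by linarith)
  rcases le_total x 0 with hx | hx
  · have := exp_neg_le_one_sub_add_sq_div_two (neg_nonneg.2 hx)
    rw [neg_neg] at this
    nlinarith
  · have h3 : 0 < 3 - x := by linarith
    have hx3 : x ^ 2 / (2 * (1 - x / 3)) ≤ x ^ 2 / (2 * (1 - c / 3)) :=
      div_le_div_of_nonneg_left (sq_nonneg x) (by linarith) (by linarith)
    have hpade : exp x ≤ 1 + x + x ^ 2 / (2 * (1 - x / 3)) := by
      rw [show 1 + x + x ^ 2 / (2 * (1 - x / 3)) = (3 + 2 * x + x ^ 2 / 2) / (3 - x) by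
        field_simp; ring, le_div_iff₀ h3, mul_comm]
      exact three_sub_mul_exp_le hx
    linarith

section Concentration

variable {d T : ℕ} {P : Fin d → ℝ}

/-- The deviation `S ε + B ε² / 6` comes from the tilt `ε / (S + B ε / 3)`. -/
theorem probT_bernstein (hP0 : ∀ i, 0 ≤ P i) (hP1 : ∑ i, P i = 1) (hT : 0 < T)
    {f : Fin d → ℝ} {B S ε : ℝ} (hB : 0 ≤ B) (hS : 0 < S) (hε : 0 ≤ ε)
    (hfB : ∀ i, f i ≤ B) (hmean : ∑ i, f i * P i = 0) (hvar : ∑ i, f i ^ 2 * P i ≤ S ^ 2) :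
    probT P T (fun ω => S * ε + B * ε ^ 2 / 6 ≤ ∑ i, f i * empDist ω i) ≤
      exp (-(T * ε ^ 2 / 2)) := by
  set q := S + B * ε / 3 with hq_def
  have hq : 0 < q := by positivity
  set l := ε / q with hl_def
  have hl : 0 ≤ l := by positivity
  have hlB : l * B < 3 := by
    rw [hl_def, div_mul_eq_mul_div, div_lt_iff₀ hq, hq_def]
    linarith
  have hden : 1 - l * B / 3 = S / q := by rw [hl_def, hq_def]; field_simp; ring
  set β := l ^ 2 / (2 * (1 - l * B / 3)) with hβ_def
  have hmgf : ∑ i, exp (l * f i) * P i ≤ exp (β * S ^ 2) := calc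
    ∑ i, exp (l * f i) * P i ≤ ∑ i, (1 + l * f i + β * f i ^ 2) * P i := by
        gcongr with i
        · exact hP0 i
        · refine (exp_le_one_add_add_sq_div (mul_le_mul_of_nonneg_left (hfB i) hl)
            (by positivity) hlB).trans_eq ?_
          rw [hβ_def]; ring
    _ = 1 + β * ∑ i, f i ^ 2 * P i := by
        simp only [add_mul, Finset.sum_add_distrib, mul_assoc, ← Finset.mul_sum, hP1, hmean]
        ring
    _ ≤ 1 + β * S ^ 2 := by gcongr; rw [hβ_def, hden]; positivity
    _ ≤ exp (β * S ^ 2) := by linarith [add_one_le_exp (β * S ^ 2)]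
  have hexponent : -(l * T * (S * ε + B * ε ^ 2 / 6)) + T * (β * S ^ 2) = -(T * ε ^ 2 / 2) := by
    rw [hβ_def, hden, hl_def, hq_def]
    field_simp
    ring
  calc _ ≤ exp (-(l * T * (S * ε + B * ε ^ 2 / 6))) * (∑ i, exp (l * f i) * P i) ^ T :=
        probT_le_exp_mul_mgf_pow hP0 hT f hl
    _ ≤ exp (-(l * T * (S * ε + B * ε ^ 2 / 6))) * exp (β * S ^ 2) ^ T := by
        gcongr
        exact Finset.sum_nonneg fun i _ => mul_nonneg (exp_pos _).le (hP0 i)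
    _ = exp (-(T * ε ^ 2 / 2)) := by rw [← exp_nat_mul, ← exp_add, hexponent]

lemma sq_sqrt_sub_sqrt_le {v θ : ℝ} (hv : 0 < v) (hθ : 0 < θ) :
    (√v - √θ) ^ 2 ≤ v - θ - θ * log (v / θ) := by
  have hlog : log (v / θ) ≤ 2 * (√v / √θ - 1) := by
    have := log_le_sub_one_of_pos (sqrt_pos.2 (div_pos hv hθ))
    rw [log_sqrt (div_pos hv hθ).le, sqrt_div hv.le] at this
    linarith
  have hθlog : θ * log (v / θ) ≤ 2 * (√θ * √v - θ) := by
    have := mul_le_mul_of_nonneg_left hlog hθ.le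
    rwa [show θ * (2 * (√v / √θ - 1)) = 2 * (θ / √θ * √v - θ) by ring, div_sqrt] at this
  nlinarith [sq_sqrt hv.le, sq_sqrt hθ.le]

/-- `exp` lies below its chord on `[-log (v / θ), 0]`. -/
lemma sum_exp_mul_neg_mul_le (hP0 : ∀ i, 0 ≤ P i) (hP1 : ∑ i, P i = 1) {g : Fin d → ℝ}
    {R v θ : ℝ} (hR : 0 < R) (hv : 0 < v) (hθ : 0 < θ) (hg0 : ∀ i, 0 ≤ g i)
    (hgR : ∀ i, g i ≤ R) (hmean : ∑ i, g i * P i = v) :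
    ∑ i, exp (log (v / θ) / R * -g i) * P i ≤ exp (-((v - θ) / R)) := by
  have hchord : ∀ i, exp (log (v / θ) / R * -g i) ≤ 1 - g i / R * (1 - θ / v) := by
    intro i
    have hu0 : 0 ≤ g i / R := div_nonneg (hg0 i) hR.le
    have hu1 : g i / R ≤ 1 := (div_le_one hR).2 (hgR i)
    have := convexOn_exp.2 (Set.mem_univ 0) (Set.mem_univ (-log (v / θ)))
      (sub_nonneg.2 hu1) hu0 (by ring)
    simp only [smul_eq_mul, mul_zero, zero_add, exp_zero, mul_one, exp_neg,
      exp_log (div_pos hv hθ), inv_div] at this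
    rw [show log (v / θ) / R * -g i = g i / R * -log (v / θ) by ring]
    linarith
  calc ∑ i, exp (log (v / θ) / R * -g i) * P i ≤ ∑ i, (1 - g i / R * (1 - θ / v)) * P i := by
        gcongr with i
        exacts [hP0 i, hchord i]
    _ = 1 - (v - θ) / R := by
        simp only [sub_mul, Finset.sum_sub_distrib, one_mul, hP1]
        rw [show ∑ i, g i / R * (1 - θ / v) * P i = (1 - θ / v) / R * ∑ i, g i * P i by
          rw [Finset.mul_sum]; exact Finset.sum_congr rfl fun i _ => by ring, hmean]
        field_simp
    _ ≤ exp (-((v - θ) / R)) := by linarith [add_one_le_exp (-((v - θ) / R))]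

theorem probT_lower_tail (hP0 : ∀ i, 0 ≤ P i) (hP1 : ∑ i, P i = 1) (hT : 0 < T)
    {g : Fin d → ℝ} {R v θ : ℝ} (hθ : 0 < θ) (hθv : θ ≤ v)
    (hg0 : ∀ i, 0 ≤ g i) (hgR : ∀ i, g i ≤ R) (hmean : ∑ i, g i * P i = v) :
    probT P T (fun ω => ∑ i, g i * empDist ω i ≤ θ) ≤ exp (-(T * (√v - √θ) ^ 2 / R)) := by
  have hv : 0 < v := hθ.trans_le hθv
  have hR : 0 < R := by
    refine hv.trans_le ?_
    calc v = ∑ i, g i * P i := hmean.symm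
      _ ≤ ∑ i, R * P i := by gcongr with i; exacts [hP0 i, hgR i]
      _ = R := by rw [← Finset.mul_sum, hP1, mul_one]
  set l := log (v / θ) / R with hl_def
  have hl : 0 ≤ l := div_nonneg (log_nonneg ((one_le_div₀ hθ).2 hθv)) hR.le
  have hexponent : -(l * T * -θ) + T * -((v - θ) / R) = -(T * (v - θ - θ * log (v / θ)) / R) := by
    rw [hl_def]; field_simp; ring
  calc _ = probT P T (fun ω => -θ ≤ ∑ i, (-g i) * empDist ω i) := by
        simp only [neg_mul, Finset.sum_neg_distrib, neg_le_neg_iff]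
    _ ≤ exp (-(l * T * -θ)) * (∑ i, exp (l * -g i) * P i) ^ T :=
        probT_le_exp_mul_mgf_pow hP0 hT _ hl
    _ ≤ exp (-(l * T * -θ)) * exp (-((v - θ) / R)) ^ T := by
        gcongr
        · exact Finset.sum_nonneg fun i _ => mul_nonneg (exp_pos _).le (hP0 i)
        · exact sum_exp_mul_neg_mul_le hP0 hP1 hR hv hθ hg0 hgR hmean
    _ = exp (-(T * (v - θ - θ * log (v / θ)) / R)) := by
        rw [← exp_nat_mul, ← exp_add, hexponent]
    _ ≤ exp (-(T * (√v - √θ) ^ 2 / R)) := by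
        gcongr
        exact sq_sqrt_sub_sqrt_le hv hθ

lemma sum_sq_sub_mul_le_mul (hP0 : ∀ i, 0 ≤ P i) (hP1 : ∑ i, P i = 1) {g : Fin d → ℝ}
    {m M : ℝ} (hg0 : ∀ i, 0 ≤ g i) (hgM : ∀ i, g i ≤ M) (hmean : ∑ i, g i * P i = m) :
    ∑ i, (g i - m) ^ 2 * P i ≤ M * m := calc
  ∑ i, (g i - m) ^ 2 * P i = ∑ i, g i ^ 2 * P i - m ^ 2 := by
    have hexpand : ∀ i, (g i - m) ^ 2 * P i = g i ^ 2 * P i - 2 * m * (g i * P i) + m ^ 2 * P i :=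
      fun i => by ring
    simp only [hexpand, Finset.sum_add_distrib, Finset.sum_sub_distrib, ← Finset.mul_sum, hP1,
      hmean]
    ring
  _ ≤ ∑ i, M * (g i * P i) := by
    have : ∑ i, g i ^ 2 * P i ≤ ∑ i, M * (g i * P i) := Finset.sum_le_sum fun i _ => by
      rw [sq, mul_assoc]
      exact mul_le_mul_of_nonneg_right (hgM i) (mul_nonneg (hg0 i) (hP0 i))
    nlinarith
  _ = M * m := by rw [← Finset.mul_sum, hmean]

end Concentration

section Loss

variable {X : Type*} {d : ℕ} (ℓ : X → Fin d → ℝ) (x : X) {Q : Fin d → ℝ}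

lemma sum_sub_mul_eq_cost_sub (hQ : ∑ i, Q i = 1) (c : ℝ) :
    ∑ i, (ℓ x i - c) * Q i = cost ℓ x Q - c := by
  simp only [sub_mul, Finset.sum_sub_distrib, ← Finset.mul_sum, hQ, mul_one, cost]

lemma sum_sub_mul_eq_sub_cost (hQ : ∑ i, Q i = 1) (c : ℝ) :
    ∑ i, (c - ℓ x i) * Q i = c - cost ℓ x Q := by
  simp only [sub_mul, Finset.sum_sub_distrib, ← Finset.mul_sum, hQ, mul_one, cost]

lemma sum_sq_sub_mul_eq_varLoss_add (hQ : ∑ i, Q i = 1) (c : ℝ) :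
    ∑ i, (ℓ x i - c) ^ 2 * Q i = varLoss ℓ x Q + (cost ℓ x Q - c) ^ 2 := by
  have hexpand : ∀ i, (ℓ x i - c) ^ 2 * Q i =
      ℓ x i ^ 2 * Q i - 2 * c * (ℓ x i * Q i) + c ^ 2 * Q i := fun i => by ring
  simp only [hexpand, Finset.sum_add_distrib, Finset.sum_sub_distrib, ← Finset.mul_sum, hQ,
    varLoss, cost]
  ring

lemma varLoss_nonneg (hQ : Q ∈ simplex d) : 0 ≤ varLoss ℓ x Q := by
  have h := sum_sq_sub_mul_eq_varLoss_add ℓ x hQ.2 (cost ℓ x Q)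
  rw [sub_self, sq, mul_zero, add_zero] at h
  exact h ▸ Finset.sum_nonneg fun i _ => mul_nonneg (sq_nonneg _) (hQ.1 i)

lemma cV_eq_cost_add_sqrt_mul_sqrt {a : ℕ → ℝ} {T : ℕ} (h : 0 ≤ 2 * a T / T) :
    cV a ℓ x Q T = cost ℓ x Q + √(2 * a T / T) * √(varLoss ℓ x Q) := by
  rw [cV, sqrt_mul h]

lemma cost_eq_and_varLoss_eq_zero_of_varLoss_eq_zero {P : Fin d → ℝ} (hP : P ∈ simplexInt d)
    (hvar : varLoss ℓ x P = 0) (hQ : ∑ i, Q i = 1) :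
    cost ℓ x Q = cost ℓ x P ∧ varLoss ℓ x Q = 0 := by
  have hconst : ∀ i, ℓ x i = cost ℓ x P := by
    have hsum := sum_sq_sub_mul_eq_varLoss_add ℓ x hP.2 (cost ℓ x P)
    rw [hvar, sub_self, zero_add, sq, mul_zero,
      Finset.sum_eq_zero_iff_of_nonneg fun i _ => mul_nonneg (sq_nonneg _) (hP.1 i).le] at hsum
    intro i
    have := hsum i (Finset.mem_univ i)
    rw [mul_eq_zero, sq_eq_zero_iff, sub_eq_zero] at this
    exact this.resolve_right (hP.1 i).ne'
  have hcost : cost ℓ x Q = cost ℓ x P := calc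
    cost ℓ x Q = ∑ i, cost ℓ x P * Q i := Finset.sum_congr rfl fun i _ => by rw [hconst i]
    _ = cost ℓ x P := by rw [← Finset.mul_sum, hQ, mul_one]
  refine ⟨hcost, ?_⟩
  calc
    varLoss ℓ x Q = ∑ i, cost ℓ x P ^ 2 * Q i - cost ℓ x P ^ 2 := by
      rw [varLoss, hcost]
      exact congrArg (· - _) (Finset.sum_congr rfl fun i _ => by rw [hconst i])
    _ = 0 := by rw [← Finset.mul_sum, hQ, mul_one, sub_self]

variable {ℓ x} {K : ℝ} (hK : ∀ i, |ℓ x i| ≤ K / 2)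
include hK

lemma abs_cost_le (hQ : Q ∈ simplex d) : |cost ℓ x Q| ≤ K / 2 := calc
  |cost ℓ x Q| ≤ ∑ i, |ℓ x i * Q i| := Finset.abs_sum_le_sum_abs _ _
  _ ≤ ∑ i, K / 2 * Q i := by
      gcongr with i
      rw [abs_mul, abs_of_nonneg (hQ.1 i)]
      exact mul_le_mul_of_nonneg_right (hK i) (hQ.1 i)
  _ = K / 2 := by rw [← Finset.mul_sum, hQ.2, mul_one]

lemma abs_sub_cost_le (hQ : Q ∈ simplex d) (i : Fin d) : |ℓ x i - cost ℓ x Q| ≤ K :=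
  (abs_sub _ _).trans (by linarith [hK i, abs_cost_le hK hQ])

lemma sqrt_varLoss_le (hQ : Q ∈ simplex d) : √(varLoss ℓ x Q) ≤ K / 2 := by
  have hK0 : 0 ≤ K / 2 := (abs_nonneg _).trans (abs_cost_le hK hQ)
  refine sqrt_le_iff.2 ⟨hK0, ?_⟩
  calc varLoss ℓ x Q ≤ ∑ i, ℓ x i ^ 2 * Q i := by
        rw [varLoss]; linarith [sq_nonneg (cost ℓ x Q)]
    _ ≤ ∑ i, (K / 2) ^ 2 * Q i := Finset.sum_le_sum fun i _ =>
        mul_le_mul_of_nonneg_right (sq_le_sq' (abs_le.1 (hK i)).1 (abs_le.1 (hK i)).2) (hQ.1 i)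
    _ = (K / 2) ^ 2 := by rw [← Finset.mul_sum, hQ.2, mul_one]

end Loss

section Deviation

variable {d T : ℕ} {P : Fin d → ℝ}

lemma sqrt_shrunk_sq_add_le {K s ε : ℝ} (hε : 0 ≤ ε) (hs : 0 ≤ s) (hsK : s ≤ K / 2)
    (hKε : K * ε < s) : √((s - K * ε) ^ 2 * (1 + ε ^ 2 / 4)) + 31 / 32 * (K * ε) ≤ s := by
  have hK : 0 < K := by nlinarith
  have hε2 : ε ^ 2 ≤ ε / 2 := by nlinarith
  have hsqrt : √((s - K * ε) ^ 2 * (1 + ε ^ 2 / 4)) ≤ (s - K * ε) * (1 + ε ^ 2 / 8) :=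
    sqrt_le_iff.2 ⟨by nlinarith,
      by nlinarith [mul_nonneg (sq_nonneg (s - K * ε)) (pow_nonneg (sq_nonneg ε) 2)]⟩
  nlinarith [mul_le_mul (by linarith [mul_nonneg hK.le hε] : s - K * ε ≤ K / 2) hε2 (sq_nonneg ε)
    (by linarith)]

/-- The centre `μ - (s ε + 4 K ε² / 3) / 2` is the midpoint of the range
`(μ - s ε - K ε² / 6, μ - 7/6 K ε²)` of empirical means on which the SVP bound needs
`ŝ ≥ s - K ε`. -/
theorem probT_shifted_second_moment_le (hP0 : ∀ i, 0 ≤ P i) (hP1 : ∑ i, P i = 1) (hT : 0 < T)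
    {f : Fin d → ℝ} {μ s K ε : ℝ} (hμ : ∑ i, (f i - μ) * P i = 0)
    (hs : ∑ i, (f i - μ) ^ 2 * P i = s ^ 2) (hs0 : 0 ≤ s) (hdev : ∀ i, |f i - μ| ≤ K)
    (hsK : s ≤ K / 2) (hε : 0 ≤ ε) (hKε : K * ε < s) :
    probT P T (fun ω => ∑ i, (f i - (μ - (s * ε + 4 * K * ε ^ 2 / 3) / 2)) ^ 2 * empDist ω i ≤
      (s - K * ε) ^ 2 * (1 + ε ^ 2 / 4)) ≤ exp (-(T * ε ^ 2 / 2)) := by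
  set h := (s * ε + 4 * K * ε ^ 2 / 3) / 2 with hh
  set θ := (s - K * ε) ^ 2 * (1 + ε ^ 2 / 4)
  have hK : 0 < K := by nlinarith
  have hε2 : ε ^ 2 ≤ 1 / 4 := by nlinarith
  have h0 : 0 ≤ h := by positivity
  have hhK : K + h ≤ 31 / 24 * K := by rw [hh]; nlinarith
  have hθ : 0 < θ := by have : 0 < s - K * ε := by linarith
                        positivity
  have hmargin : √θ + 31 / 32 * (K * ε) ≤ s := sqrt_shrunk_sq_add_le hε hs0 hsK hKε
  have hs_le : s ≤ √(s ^ 2 + h ^ 2) := le_sqrt_of_sq_le (by nlinarith)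
  have hmean : ∑ i, (f i - (μ - h)) ^ 2 * P i = s ^ 2 + h ^ 2 := by
    have hexpand : ∀ i, (f i - (μ - h)) ^ 2 * P i =
        (f i - μ) ^ 2 * P i + 2 * h * ((f i - μ) * P i) + h ^ 2 * P i := fun i => by ring
    simp only [hexpand, Finset.sum_add_distrib, ← Finset.mul_sum, hs, hμ, hP1]
    ring
  have hbound : ∀ i, (f i - (μ - h)) ^ 2 ≤ (K + h) ^ 2 := fun i => by
    have := abs_le.1 (hdev i)
    exact sq_le_sq' (by linarith) (by linarith)
  refine (probT_lower_tail hP0 hP1 hT hθ ?_ (fun i => sq_nonneg _) hbound hmean).trans ?_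
  · calc θ = √θ ^ 2 := (sq_sqrt hθ.le).symm
      _ ≤ s ^ 2 := by gcongr; linarith [sqrt_nonneg θ, mul_nonneg hK.le hε]
      _ ≤ s ^ 2 + h ^ 2 := by nlinarith
  · have hgap : 31 / 32 * (K * ε) ≤ √(s ^ 2 + h ^ 2) - √θ := by linarith
    have hR : (K + h) ^ 2 * ε ^ 2 ≤ 2 * (√(s ^ 2 + h ^ 2) - √θ) ^ 2 := by
      nlinarith [mul_le_mul hhK hhK (by positivity) (by positivity),
        mul_le_mul hgap hgap (by positivity) (by linarith [mul_nonneg hK.le hε])]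
    refine exp_le_exp.2 (neg_le_neg ?_)
    rw [le_div_iff₀ (by positivity)]
    nlinarith [mul_le_mul_of_nonneg_left hR (Nat.cast_nonneg T : (0 : ℝ) ≤ T)]

lemma le_add_sqrt_of_deviations_lt {μ μ' V s K ε : ℝ} (hε : 0 ≤ ε)
    (hmean : μ - μ' < s * ε + K * ε ^ 2 / 6)
    (hsecond : (s - K * ε) ^ 2 * (1 + ε ^ 2 / 4) <
      V + (μ' - (μ - (s * ε + 4 * K * ε ^ 2 / 3) / 2)) ^ 2) :
    μ ≤ μ' + ε * √V + 7 / 6 * K * ε ^ 2 := by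
  have hεV : 0 ≤ ε * √V := mul_nonneg hε (sqrt_nonneg V)
  by_cases hsmall : μ - μ' ≤ 7 / 6 * K * ε ^ 2
  · linarith
  have hcentre : (μ' - (μ - (s * ε + 4 * K * ε ^ 2 / 3) / 2)) ^ 2 ≤ (ε * (s - K * ε) / 2) ^ 2 :=
    sq_le_sq' (by linarith) (by linarith)
  have hV : s - K * ε ≤ √V := by
    refine le_sqrt_of_sq_le ?_
    nlinarith
  nlinarith [mul_le_mul_of_nonneg_left hV hε]

lemma sub_le_of_deviations_lt {μ μ' V s K ε : ℝ} (hε : 0 ≤ ε) (hs : 0 ≤ s) (hK : 0 ≤ K)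
    (hmean : μ' - μ < s * ε + K * ε ^ 2 / 6)
    (hsecond : V + (μ' - μ) ^ 2 - s ^ 2 < K * s * ε + K ^ 2 * ε ^ 2 / 6) :
    μ' + ε * √V - 2 * ε * s - 7 / 6 * K * ε ^ 2 ≤ μ := by
  have hV : √V ≤ s + K * ε :=
    sqrt_le_iff.2 ⟨by positivity, by nlinarith [sq_nonneg (μ' - μ), mul_nonneg hK hε]⟩
  nlinarith [mul_le_mul_of_nonneg_left hV hε]

end Deviation

section SVP

variable {X : Type*} {d T : ℕ} {ℓ : X → Fin d → ℝ} {x : X} {P : Fin d → ℝ} {K : ℝ}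

theorem one_sub_two_exp_le_probT_cost_le (hP : P ∈ simplexInt d) (hT : 0 < T)
    (hK : ∀ i, |ℓ x i| ≤ K / 2) {ε : ℝ} (hε : 0 ≤ ε) :
    1 - 2 * exp (-(T * ε ^ 2 / 2)) ≤ probT P T (fun ω =>
      cost ℓ x P ≤ cost ℓ x (empDist ω) + ε * √(varLoss ℓ x (empDist ω)) + 7 / 6 * K * ε ^ 2) := by
  have hPs : P ∈ simplex d := ⟨fun i => (hP.1 i).le, hP.2⟩
  have hK0 : 0 ≤ K := by linarith [abs_nonneg (cost ℓ x P), abs_cost_le hK hPs]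
  rcases (varLoss_nonneg ℓ x hPs).eq_or_lt with hvar | hvar
  · refine le_of_le_of_eq ?_ (probT_of_forall hP.2 fun ω => ?_).symm
    · linarith [exp_pos (-(T * ε ^ 2 / 2))]
    · obtain ⟨hcost, hvarQ⟩ := cost_eq_and_varLoss_eq_zero_of_varLoss_eq_zero ℓ x hP hvar.symm
        (empDist_mem_simplex hT ω).2
      rw [hcost, hvarQ, sqrt_zero, mul_zero, add_zero]
      exact le_add_of_nonneg_right (by positivity)
  set μ := cost ℓ x P
  set s := √(varLoss ℓ x P)
  have hs : 0 < s := sqrt_pos.2 hvar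
  have hs2 : ∑ i, (ℓ x i - μ) ^ 2 * P i = s ^ 2 := by
    rw [sum_sq_sub_mul_eq_varLoss_add ℓ x hP.2, sq_sqrt hvar.le, sub_self]; ring
  have hupper := probT_bernstein hPs.1 hP.2 hT (f := fun i => μ - ℓ x i) hK0 hs hε
    (fun i => by linarith [(abs_le.1 (abs_sub_cost_le hK hPs i)).1])
    (by rw [sum_sub_mul_eq_sub_cost ℓ x hP.2, sub_self])
    (by simp only [← hs2, ← neg_sub (ℓ x _), neg_sq, le_refl])
  by_cases hKε : K * ε < s
  · have hlower := probT_shifted_second_moment_le hPs.1 hP.2 hT (f := ℓ x)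
      (by rw [sum_sub_mul_eq_cost_sub ℓ x hP.2, sub_self]) hs2 hs.le
      (abs_sub_cost_le hK hPs) (sqrt_varLoss_le hK hPs) hε hKε
    refine one_sub_two_mul_le_probT hPs.1 hP.2 hupper hlower fun ω hω => ?_
    have hQ := (empDist_mem_simplex hT ω).2
    by_contra! hdev
    rw [sum_sub_mul_eq_sub_cost ℓ x hQ, sum_sq_sub_mul_eq_varLoss_add ℓ x hQ] at hdev
    exact hω (le_add_sqrt_of_deviations_lt hε hdev.1 hdev.2)
  · refine one_sub_two_mul_le_probT hPs.1 hP.2 hupper hupper fun ω hω => Or.inl ?_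
    by_contra! hdev
    rw [sum_sub_mul_eq_sub_cost ℓ x (empDist_mem_simplex hT ω).2] at hdev
    refine hω ?_
    nlinarith [mul_nonneg hε (sqrt_nonneg (varLoss ℓ x (empDist ω)))]

theorem one_sub_two_exp_le_probT_le_cost (hP : P ∈ simplexInt d) (hT : 0 < T)
    (hK : ∀ i, |ℓ x i| ≤ K / 2) {ε : ℝ} (hε : 0 ≤ ε) :
    1 - 2 * exp (-(T * ε ^ 2 / 2)) ≤ probT P T (fun ω =>
      cost ℓ x (empDist ω) + ε * √(varLoss ℓ x (empDist ω)) - 2 * ε * √(varLoss ℓ x P) -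
        7 / 6 * K * ε ^ 2 ≤ cost ℓ x P) := by
  have hPs : P ∈ simplex d := ⟨fun i => (hP.1 i).le, hP.2⟩
  have hK0 : 0 ≤ K := by linarith [abs_nonneg (cost ℓ x P), abs_cost_le hK hPs]
  rcases (varLoss_nonneg ℓ x hPs).eq_or_lt with hvar | hvar
  · refine le_of_le_of_eq ?_ (probT_of_forall hP.2 fun ω => ?_).symm
    · linarith [exp_pos (-(T * ε ^ 2 / 2))]
    · obtain ⟨hcost, hvarQ⟩ := cost_eq_and_varLoss_eq_zero_of_varLoss_eq_zero ℓ x hP hvar.symm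
        (empDist_mem_simplex hT ω).2
      rw [hcost, hvarQ, ← hvar, sqrt_zero, mul_zero, add_zero, mul_zero, sub_zero]
      exact sub_le_self _ (by positivity)
  set μ := cost ℓ x P
  set s := √(varLoss ℓ x P)
  have hs : 0 < s := sqrt_pos.2 hvar
  have hKs : 0 < K * s := mul_pos (by linarith [sqrt_varLoss_le hK hPs]) hs
  have hs2 : ∑ i, (ℓ x i - μ) ^ 2 * P i = s ^ 2 := by
    rw [sum_sq_sub_mul_eq_varLoss_add ℓ x hP.2, sq_sqrt hvar.le, sub_self]; ring
  have hsq_le : ∀ i, (ℓ x i - μ) ^ 2 ≤ K ^ 2 := fun i =>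
    sq_le_sq' (abs_le.1 (abs_sub_cost_le hK hPs i)).1 (abs_le.1 (abs_sub_cost_le hK hPs i)).2
  have hmean := probT_bernstein hPs.1 hP.2 hT (f := fun i => ℓ x i - μ) hK0 hs hε
    (fun i => (abs_le.1 (abs_sub_cost_le hK hPs i)).2)
    (by rw [sum_sub_mul_eq_cost_sub ℓ x hP.2, sub_self]) hs2.le
  have hsecond := probT_bernstein hPs.1 hP.2 hT (f := fun i => (ℓ x i - μ) ^ 2 - s ^ 2)
    (sq_nonneg K) hKs hε (fun i => by linarith [hsq_le i, sq_nonneg s])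
    (by simp only [sub_mul, Finset.sum_sub_distrib, hs2, ← Finset.mul_sum, hP.2, mul_one,
      sub_self])
    (by rw [mul_pow]
        nlinarith [sum_sq_sub_mul_le_mul hPs.1 hP.2 (fun i => sq_nonneg _) hsq_le hs2])
  refine one_sub_two_mul_le_probT hPs.1 hP.2 hmean hsecond fun ω hω => ?_
  have hQ := (empDist_mem_simplex hT ω).2
  by_contra! hdev
  rw [sum_sub_mul_eq_cost_sub ℓ x hQ] at hdev
  simp only [sub_mul, Finset.sum_sub_distrib, ← Finset.mul_sum, hQ, mul_one,
    sum_sq_sub_mul_eq_varLoss_add ℓ x hQ] at hdev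
  exact hω (sub_le_of_deviations_lt hε hs.le hK0 hdev.1 (by linarith [hdev.2]))

end SVP

lemma abs_le_iSup_iSup_abs {X ι : Type*} [TopologicalSpace X] [CompactSpace X] [Fintype ι]
    {ℓ : X → ι → ℝ} (hℓ : ∀ i, Continuous fun x => ℓ x i) (x : X) (i : ι) :
    |ℓ x i| ≤ ⨆ x', ⨆ j, |ℓ x' j| := by
  have hbdd : BddAbove (Set.range fun x' => ⨆ j, |ℓ x' j|) := by
    obtain ⟨C, hC⟩ := (isCompact_range (continuous_finsetSum _ fun j _ => (hℓ j).abs)).bddAbove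
    refine ⟨C, Set.forall_mem_range.2 fun x' =>
      (Real.iSup_le (fun j => ?_) ?_).trans (hC ⟨x', rfl⟩)⟩
    · exact Finset.single_le_sum (fun j _ => abs_nonneg (ℓ x' j)) (Finset.mem_univ j)
    · exact Finset.sum_nonneg fun j _ => abs_nonneg _
  exact (le_ciSup (Set.finite_range _).bddAbove i).trans (le_ciSup hbdd x)

/-- Finite sample guarantees for the SVP predictor, with
`K = 2·sup_{x∈𝒳} max_{i∈Σ} |ℓ(x,i)|`. -/
theorem stmt_9 {X : Type*} [MetricSpace X] [CompactSpace X] {d : ℕ}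
    (ℓ : X → Fin d → ℝ) (hℓ : ∀ i, Continuous fun x => ℓ x i)
    (a : ℕ → ℝ) (ha_pos : ∀ T, 0 < a T)
    (x : X) (P : Fin d → ℝ) (hP : P ∈ simplexInt d)
    (T : ℕ) (hT : 0 < T)
    (K : ℝ) (hK : K = 2 * ⨆ x' : X, ⨆ i : Fin d, |ℓ x' i|) :
    1 - 2 * Real.exp (-a T) ≤
        probT P T (fun ω =>
          cost ℓ x P ≤ cV a ℓ x (empDist ω) T + 7 * K / 3 * (a T / (T : ℝ))) ∧
      1 - 2 * Real.exp (-a T) ≤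
        probT P T (fun ω =>
          cV a ℓ x (empDist ω) T -
              Real.sqrt (8 * a T / (T : ℝ) * varLoss ℓ x P) -
              7 * K / 3 * (a T / (T : ℝ)) ≤ cost ℓ x P) := by
  have hK' : ∀ i, |ℓ x i| ≤ K / 2 := fun i => by
    rw [hK]
    linarith [abs_le_iSup_iSup_abs hℓ x i]
  have haT := ha_pos T
  set ε := √(2 * a T / T)
  have hε2 : ε ^ 2 = 2 * a T / T := sq_sqrt (by positivity)
  have ha : a T = T * ε ^ 2 / 2 := by rw [hε2]; field_simp
  have hcV : ∀ Q, cV a ℓ x Q T = cost ℓ x Q + ε * √(varLoss ℓ x Q) := fun Q =>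
    cV_eq_cost_add_sqrt_mul_sqrt ℓ x (by positivity)
  have h7 : 7 * K / 3 * (a T / T) = 7 / 6 * K * ε ^ 2 := by rw [hε2]; ring
  have h8 : √(8 * a T / T * varLoss ℓ x P) = 2 * ε * √(varLoss ℓ x P) := by
    rw [show 8 * a T / T = (2 * ε) ^ 2 by rw [mul_pow, hε2]; ring, sqrt_mul (sq_nonneg _),
      sqrt_sq (by positivity)]
  simp only [hcV, h7, h8]
  rw [ha]
  exact ⟨one_sub_two_exp_le_probT_cost_le hP hT hK' (sqrt_nonneg _),
    one_sub_two_exp_le_probT_le_cost hP hT hK' (sqrt_nonneg _)⟩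

end DDO
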